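/- (Fixed point soundness, closed terms) If a :_k (τ → τ), then (fix a) :_k τ, where fix a → a (fix a). -/
import Mathlib


/-- Terms of the call-by-name λ-calculus with constants and a fixpoint operator. -/
inductive Tm where
  | const : ℕ → Tm
  | var : String → Tm
  | lam : String → Tm → Tm
  | app : Tm → Tm → Tm
  | fix : Tm → Tm
deriving DecidableEq

/-- Substitution of `b` for free occurrences of `x` (capture-avoiding when `b` is closed). -/
def subst (x : String) (b : Tm) : Tm → Tm
  | .const c => .const c
  | .var y => if y = x then b else .var y
  | .lam y a => if y = x then .lam y a else .lam y (subst x b a)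
  | .app a1 a2 => .app (subst x b a1) (subst x b a2)
  | .fix a => .fix (subst x b a)

/-- Free variables. -/
def fv : Tm → Set String
  | .const _ => ∅
  | .var y => {y}
  | .lam y a => fv a \ {y}
  | .app a b => fv a ∪ fv b
  | .fix a => fv a

def Closed (a : Tm) : Prop := fv a = ∅

/-- Call-by-name small-step semantics. -/
inductive Step : Tm → Tm → Prop
  | beta (x : String) (a b : Tm) : Step (.app (.lam x a) b) (subst x b a)
  | app1 {a a' : Tm} (b : Tm) : Step a a' → Step (.app a b) (.app a' b)
  | fix (a : Tm) : Step (.fix a) (.app a (.fix a))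

/-- `Steps j a b` means `a →^j b`. -/
inductive Steps : ℕ → Tm → Tm → Prop
  | refl (a : Tm) : Steps 0 a a
  | head {a b c : Tm} {j : ℕ} : Step a b → Steps j b c → Steps (j + 1) a c

/-- Values: constants and closed λ-abstractions. -/
def IsValue (v : Tm) : Prop :=
  (∃ c, v = .const c) ∨ (∃ x a, v = .lam x a ∧ Closed v)

/-- Irreducible terms. -/
def Irred (a : Tm) : Prop := ¬ ∃ b, Step a b

/-- Semantic types are sets of pairs (index, value). -/
abbrev SemType := Set (ℕ × Tm)

/-- A type contains only values and is closed under decreasing index. -/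
def IsType (τ : SemType) : Prop :=
  (∀ p ∈ τ, IsValue p.2) ∧ ∀ k v j, (k, v) ∈ τ → j ≤ k → (j, v) ∈ τ

/-- `a :ₖ τ`: `a` is closed and whenever `a →^j b` with `b` irreducible and `j < k`,
then `(k - j, b) ∈ τ`. -/
def HasTypeIdx (a : Tm) (k : ℕ) (τ : SemType) : Prop :=
  Closed a ∧ ∀ j b, j < k → Steps j a b → Irred b → (k - j, b) ∈ τ

/-- The semantic function type `τ → τ'`. -/
def Arrow (τ τ' : SemType) : SemType :=
  {p | ∃ x a, p.2 = Tm.lam x a ∧ Closed (Tm.lam x a) ∧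
    ∀ j < p.1, ∀ b, HasTypeIdx b j τ → HasTypeIdx (subst x b a) j τ'}

/-- The semantic type `Nat` of constants. -/
def NatTy : SemType := {p | ∃ c, p.2 = Tm.const c}

/-- `a` is safe for `k` steps. -/
def SafeFor (k : ℕ) (a : Tm) : Prop :=
  ∀ j b, j < k → Steps j a b → IsValue b ∨ ∃ b', Step b b'

/-- `a` is safe. -/
def Safe (a : Tm) : Prop := ∀ k, SafeFor k a

/-- Applying a ground substitution `γ` to a term. -/
def applySubst (γ : String → Option Tm) : Tm → Tm
  | .const c => .const c
  | .var y => (γ y).getD (.var y)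
  | .lam y a => .lam y (applySubst (fun z => if z = y then none else γ z) a)
  | .app a b => .app (applySubst γ a) (applySubst γ b)
  | .fix a => .fix (applySubst γ a)

/-- `γ :ₖ Γ`: same domains, and `γ(x) :ₖ Γ(x)` for all `x`. -/
def EnvOK (γ : String → Option Tm) (Γ : String → Option SemType) (k : ℕ) : Prop :=
  (∀ x, (γ x).isSome ↔ (Γ x).isSome) ∧
  ∀ x t τ, γ x = some t → Γ x = some τ → HasTypeIdx t k τ

/-- A type environment maps variables to (semantic) types. -/
def TyEnvOK (Γ : String → Option SemType) : Prop :=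
  ∀ x τ, Γ x = some τ → IsType τ

/-- `Γ ⊨ a :ₖ τ`. -/
def ModelsIdx (Γ : String → Option SemType) (a : Tm) (k : ℕ) (τ : SemType) : Prop :=
  ∀ γ, EnvOK γ Γ k → HasTypeIdx (applySubst γ a) k τ

/-- `Γ ⊨ a : τ`. -/
def Models (Γ : String → Option SemType) (a : Tm) (τ : SemType) : Prop :=
  ∀ k, ModelsIdx Γ a k τ

/-- Update of a partial map. -/
def upd {α : Type _} (f : String → Option α) (x : String) (v : α) :
    String → Option α := fun y => if y = x then some v else f y

/-- The k-approximation of an indexed set. -/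
def floorTy (τ : SemType) (k : ℕ) : SemType := {p ∈ τ | p.1 < k}

/-- Well founded functionals. -/
def WFF (F : SemType → SemType) : Prop :=
  (∀ τ, IsType τ → IsType (F τ)) ∧
  ∀ τ k, IsType τ → floorTy (F τ) (k + 1) = floorTy (F (floorTy τ k)) (k + 1)

/-- The candidate fixed point `μF`. -/
def muF (F : SemType → SemType) : SemType := {p | p ∈ F^[p.1 + 1] ∅}

lemma irred_lam (x : String) (a : Tm) : Irred (.lam x a) := by
  rintro ⟨b, hb⟩; cases hb

lemma isType_arrow (τ τ' : SemType) : IsType (Arrow τ τ') := by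
  constructor
  · rintro ⟨k, v⟩ ⟨x, b, rfl, hcl, _⟩
    exact Or.inr ⟨x, b, rfl, hcl⟩
  · rintro k v j ⟨x, b, heq, hcl, hb⟩ hjk
    exact ⟨x, b, heq, hcl, fun i hi c hc => hb i (lt_of_lt_of_le hi hjk) c hc⟩

lemma hasTypeIdx_mono {a : Tm} {k k' : ℕ} {τ : SemType} (hτ : IsType τ)
    (h : HasTypeIdx a k τ) (hk : k' ≤ k) : HasTypeIdx a k' τ := by
  refine ⟨h.1, fun j b hj hs hi => ?_⟩
  exact hτ.2 _ _ _ (h.2 j b (lt_of_lt_of_le hj hk) hs hi) (Nat.sub_le_sub_right hk j)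

lemma app_decomp {n : ℕ} {a c b : Tm} (h : Steps n (.app a c) b) :
    (∃ a', Steps n a a' ∧ b = .app a' c) ∨
    (∃ j x body, j + 1 ≤ n ∧ Steps j a (.lam x body) ∧
      Steps (n - j - 1) (subst x c body) b) := by
  induction n generalizing a with
  | zero => cases h; exact Or.inl ⟨a, .refl a, rfl⟩
  | succ n ih =>
    cases h with
    | head s hs =>
      cases s with
      | beta x a0 b0 =>
        refine Or.inr ⟨0, x, a0, by omega, .refl _, ?_⟩
        simpa using hs
      | app1 _ s' =>
        rcases ih hs with ⟨a', h1, h2⟩ | ⟨j, x, body, hj, h1, h2⟩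
        · exact Or.inl ⟨a', .head s' h1, h2⟩
        · refine Or.inr ⟨j + 1, x, body, by omega, .head s' h1, ?_⟩
          have e : n + 1 - (j + 1) - 1 = n - j - 1 := by omega
          rw [e]; exact h2

theorem fix_closed (a : Tm) (k : ℕ) (τ : SemType) (hτ : IsType τ)
    (h : HasTypeIdx a k (Arrow τ τ)) :
    HasTypeIdx (Tm.fix a) k τ := by
  revert h
  induction k using Nat.strong_induction_on with
  | _ k ih =>
  intro h
  have hclfix : Closed (Tm.fix a) := h.1
  refine ⟨hclfix, fun j b hj hs hi => ?_⟩
  cases hs with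
  | refl => exact absurd ⟨_, Step.fix a⟩ hi
  | head s hs' =>
    rename_i mid j'
    cases s
    rcases app_decomp hs' with ⟨a', h1, rfl⟩ | ⟨j1, x, body, hj1, h1, h2⟩
    · have hia' : Irred a' := by
        rintro ⟨c, hc⟩; exact hi ⟨_, .app1 _ hc⟩
      obtain ⟨x, body, heq, -, -⟩ := h.2 j' a' (by omega) h1 hia'
      simp only at heq
      subst heq
      exact absurd ⟨_, Step.beta x body (Tm.fix a)⟩ hi
    · obtain ⟨x', body', heq, hcl, hbody⟩ := h.2 j1 _ (by omega) h1 (irred_lam x body)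
      simp only at heq
      injection heq with e1 e2
      subst e1; subst e2
      set m := k - j1 - 2 with hm
      have hfix : HasTypeIdx (Tm.fix a) m τ :=
        ih m (by omega) (hasTypeIdx_mono (isType_arrow τ τ) h (by omega))
      have hsub : HasTypeIdx (subst x (Tm.fix a) body) m τ :=
        hbody m (by simp only; omega) _ hfix
      have hres := hsub.2 (j' - j1 - 1) b (by omega) h2 hi
      have e : m - (j' - j1 - 1) = k - (j' + 1) := by omega
      rwa [e] at hres
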